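/- arXiv:1108.3253 — 3 statements merged into one kernel-verified Lean document; each statement's English description precedes it below -/
import Mathlib

section
/- If p : E → B is a continuous map with the unique path lifting property (every path in B with a chosen starting point in the fiber has at most one lift, and at least one lift exists) and E is path-connected, then each fiber p⁻¹(b₀) is a T₁ space in the subspace topology. -/
open unitInterval Topology

set_option linter.unnecessarySimpa false

universe u v w

/-- `p : E → B` is an arc-covering: unique lifting of paths given the initial point. -/
def IsArcCovering {E : Type*} {B : Type*} [TopologicalSpace E] [TopologicalSpace B]
    (p : C(E, B)) : Prop :=
  ∀ (e₀ : E) (f : C(I, B)), f 0 = p e₀ →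
    ∃! g : C(I, E), p.comp g = f ∧ g 0 = e₀

/-- The relation identifying the wedge points of a wedge of copies of `(A, a₀)` indexed by `S`. -/
def wedgeRel (S A : Type*) (a₀ : A) (x y : S × A) : Prop :=
  x = y ∨ (x.2 = a₀ ∧ y.2 = a₀)

/-- The wedge (one-point union) of copies of `(A, a₀)` indexed by `S`. -/
def Wedge (S A : Type*) (a₀ : A) : Type _ :=
  Quot (wedgeRel S A a₀)

/-- The topology of a directed wedge: a set is open iff its trace on each copy of `A`
is open, and if it contains the wedge point then it contains all copies of `A`
beyond some index. -/
instance Wedge.instTopologicalSpace (S A : Type*) (a₀ : A) [Preorder S]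
    [IsDirected S (· ≤ ·)] [TopologicalSpace A] : TopologicalSpace (Wedge S A a₀) where
  IsOpen U := (∀ s : S, IsOpen {a : A | Quot.mk (wedgeRel S A a₀) (s, a) ∈ U}) ∧
    ((∃ s : S, Quot.mk (wedgeRel S A a₀) (s, a₀) ∈ U) →
      ∃ t : S, ∀ s : S, t < s → ∀ a : A, Quot.mk (wedgeRel S A a₀) (s, a) ∈ U)
  isOpen_univ := by
    refine ⟨fun s => ?_, fun h => ?_⟩
    · exact isOpen_univ
    · obtain ⟨s, -⟩ := h
      exact ⟨s, fun _ _ _ => trivial⟩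
  isOpen_inter := by
    rintro U V ⟨hU1, hU2⟩ ⟨hV1, hV2⟩
    refine ⟨fun s => (hU1 s).inter (hV1 s), fun h => ?_⟩
    obtain ⟨tU, htU⟩ := hU2 ⟨h.choose, h.choose_spec.1⟩
    obtain ⟨tV, htV⟩ := hV2 ⟨h.choose, h.choose_spec.2⟩
    obtain ⟨t, ht1, ht2⟩ := directed_of (· ≤ ·) tU tV
    exact ⟨t, fun s hs a => ⟨htU s (lt_of_le_of_lt ht1 hs) a, htV s (lt_of_le_of_lt ht2 hs) a⟩⟩
  isOpen_sUnion := by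
    intro C hC
    constructor
    · intro s
      have : {a : A | Quot.mk (wedgeRel S A a₀) (s, a) ∈ ⋃₀ C} =
          ⋃ U ∈ C, {a : A | Quot.mk (wedgeRel S A a₀) (s, a) ∈ U} := by
        ext a
        simp only [Set.mem_setOf_eq, Set.mem_sUnion, Set.mem_iUnion, exists_prop]
        exact Iff.rfl
      rw [this]
      exact isOpen_biUnion fun U hU => (hC U hU).1 s
    · rintro ⟨s, hs⟩
      obtain ⟨U, hUC, hsU⟩ := hs
      obtain ⟨t, ht⟩ := (hC U hUC).2 ⟨s, hsU⟩
      exact ⟨t, fun s' hs' a => ⟨U, hUC, ht s' hs' a⟩⟩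

/-- An arc-hedgehog over a directed set `S`: the directed wedge of copies of `([0,1], 0)`. -/
def ArcHedgehog (S : Type*) : Type _ := Wedge S I 0

instance (S : Type*) [Preorder S] [IsDirected S (· ≤ ·)] : TopologicalSpace (ArcHedgehog S) :=
  Wedge.instTopologicalSpace S I 0

/-- `p` is an arc-hedgehog covering: maps from arc-hedgehogs lift uniquely. -/
def IsArcHedgehogCovering {E : Type*} {B : Type*} [TopologicalSpace E] [TopologicalSpace B]
    (p : C(E, B)) : Prop :=
  ∀ (S : Type u) [Preorder S] [IsDirected S (· ≤ ·)],
    ∀ (e₀ : E) (f : C(ArcHedgehog S, B)) (z₀ : ArcHedgehog S), f z₀ = p e₀ →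
      ∃! g : C(ArcHedgehog S, E), p.comp g = f ∧ g z₀ = e₀

/-- The closed unit `2`-disk. -/
noncomputable def Disk : Type := Metric.closedBall (0 : EuclideanSpace ℝ (Fin 2)) 1

noncomputable instance : TopologicalSpace Disk := by unfold Disk; infer_instance

/-- The center of the disk. -/
noncomputable def Disk.center : Disk := ⟨0, by simp⟩

/-- A disk-hedgehog over a directed set `S`: the directed wedge of copies of the pointed disk. -/
def DiskHedgehog (S : Type*) : Type _ := Wedge S Disk Disk.center

noncomputable instance (S : Type*) [Preorder S] [IsDirected S (· ≤ ·)] : TopologicalSpace (DiskHedgehog S) :=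
  Wedge.instTopologicalSpace S Disk Disk.center

/-- `p` is a disk-hedgehog covering: maps from disk-hedgehogs lift uniquely. -/
def IsDiskHedgehogCovering {E : Type*} {B : Type*} [TopologicalSpace E] [TopologicalSpace B]
    (p : C(E, B)) : Prop :=
  ∀ (S : Type u) [Preorder S] [IsDirected S (· ≤ ·)],
    ∀ (e₀ : E) (f : C(DiskHedgehog S, B)) (z₀ : DiskHedgehog S), f z₀ = p e₀ →
      ∃! g : C(DiskHedgehog S, E), p.comp g = f ∧ g z₀ = e₀

/-- `p` is a disk-covering: maps from the closed `2`-disk lift uniquely. -/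
def IsDiskCovering {E : Type*} {B : Type*} [TopologicalSpace E] [TopologicalSpace B]
    (p : C(E, B)) : Prop :=
  ∀ (e₀ : E) (f : C(Disk, B)) (d₀ : Disk), f d₀ = p e₀ →
    ∃! g : C(Disk, E), p.comp g = f ∧ g d₀ = e₀

/-- Path components of preimages of neighborhoods form a neighborhood basis of the
total space. -/
def HedgehogBasisCondition {E : Type*} {B : Type*} [TopologicalSpace E] [TopologicalSpace B]
    (p : C(E, B)) : Prop :=
  ∀ (e₀ : E) (U : Set E), IsOpen U → e₀ ∈ U →
    ∃ V ∈ 𝓝 (p e₀), {y : E | JoinedIn (p ⁻¹' V) e₀ y} ⊆ U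

/-- The monodromy relation on loops at `b₀`: two loops are identified iff any two of
their lifts starting at the same point end at the same point. -/
def MonodromyRel {E : Type*} {B : Type*} [TopologicalSpace E] [TopologicalSpace B]
    (p : C(E, B)) (b₀ : B) (α β : Path b₀ b₀) : Prop :=
  ∀ g h : C(I, E), (∀ t, p (g t) = α t) → (∀ t, p (h t) = β t) →
    g 0 = h 0 → g 1 = h 1

/-- `p` is regular: for each loop in `B`, all lifts are loops or all lifts are non-loops. -/
def IsRegularCovering {E : Type*} {B : Type*} [TopologicalSpace E] [TopologicalSpace B]
    (p : C(E, B)) : Prop :=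
  ∀ (b : B) (α : Path b b) (g h : C(I, E)),
    (∀ t, p (g t) = α t) → (∀ t, p (h t) = α t) → g 0 = g 1 → h 0 = h 1

theorem IsArcCovering.eq_of_joinedIn_fiber {E B : Type*} [TopologicalSpace E]
    [TopologicalSpace B] {p : C(E, B)} (hp : IsArcCovering p) {b : B} {x y : E}
    (h : JoinedIn (p ⁻¹' {b}) x y) : x = y := by
  obtain ⟨γ, hγ⟩ := h
  have hpx : p x = b := by simpa using hγ 0
  have hγ_eq : (γ : C(I, E)) = ContinuousMap.const I x :=
    (hp x (ContinuousMap.const I b) hpx.symm).unique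
      ⟨ContinuousMap.ext fun t => hγ t, γ.source⟩ ⟨ContinuousMap.ext fun _ => hpx, rfl⟩
  simpa using (congrArg (· 1) hγ_eq).symm

/-- Specialization inside a fibre yields a path in that fibre (`Specializes.joinedIn`), which
must then be constant. -/
theorem fiber_t1_of_isArcCovering_general {E B : Type*} [TopologicalSpace E] [TopologicalSpace B]
    (p : C(E, B)) (hp : IsArcCovering p) (b₀ : B) :
    T1Space ↥(p ⁻¹' {b₀}) := by
  rw [t1Space_iff_specializes_imp_eq]
  intro x y hxy
  exact Subtype.ext <| hp.eq_of_joinedIn_fiber <|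
    (hxy.map continuous_subtype_val).joinedIn x.2 y.2

/-- fibers of an arc-covering with path-connected total space are `T₁`. -/
theorem fiber_t1_of_isArcCovering {E B : Type*} [TopologicalSpace E] [TopologicalSpace B]
    [PathConnectedSpace E] (p : C(E, B)) (hp : IsArcCovering p) (b₀ : B) :
    T1Space ↥(p ⁻¹' {b₀}) :=
  fiber_t1_of_isArcCovering_general p hp b₀
end

section
/- Let Y be a locally path-connected space and f : Y → X a function such that f ∘ g is continuous for every continuous map g : Z → Y from an arc-hedgehog Z. Then f is continuous. -/
open unitInterval Topology

set_option linter.unnecessarySimpa false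

universe u v w

/-! If `f` is not continuous at `y₀`, there is a neighbourhood `U` of `f y₀` such that every
neighbourhood `V` of `y₀` contains a point outside `f ⁻¹' U`, and, by local path-connectedness, a
path inside `V` from `y₀` to such a point. Indexing these paths by the neighbourhoods of `y₀`
gives an arc-hedgehog in `Y` whose spikes shrink to `y₀`, hence a continuous map. Continuity of
its composite with `f` at the wedge point puts the tips of all late spikes into `U`: a
contradiction. -/

open Filter

instance Prod.isDirectedOrder {α β : Type*} [LE α] [LE β] [IsDirectedOrder α] [IsDirectedOrder β] :
    IsDirectedOrder (α × β) where
  directed p q :=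
    let ⟨a, hpa, hqa⟩ := directed_of (· ≤ ·) p.1 q.1
    let ⟨b, hpb, hqb⟩ := directed_of (· ≤ ·) p.2 q.2
    ⟨(a, b), ⟨hpa, hpb⟩, ⟨hqa, hqb⟩⟩

instance Prod.noMaxOrder_of_right {α β : Type*} [Preorder α] [Preorder β] [NoMaxOrder β] :
    NoMaxOrder (α × β) where
  exists_gt p :=
    let ⟨b, hb⟩ := exists_gt p.2
    ⟨(p.1, b), Prod.mk_lt_mk_iff_right.2 hb⟩

instance Filter.isCodirectedOrder_mem {α : Type*} (l : Filter α) : IsCodirectedOrder {s // s ∈ l} where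
  directed s t := ⟨⟨s.1 ∩ t.1, inter_mem s.2 t.2⟩, Set.inter_subset_left, Set.inter_subset_right⟩

theorem exists_joinedIn_mem_of_mem_closure {Y : Type*} [TopologicalSpace Y]
    [LocallyPathConnectedSpace Y] {B V : Set Y} {y₀ : Y} (hB : y₀ ∈ closure B) (hV : V ∈ 𝓝 y₀) :
    ∃ y ∈ B, JoinedIn V y₀ y := by
  obtain ⟨P, ⟨hP, hPc⟩, hPV⟩ := (path_connected_basis y₀).mem_iff.1 hV
  obtain ⟨y, hyP, hyB⟩ := mem_closure_iff_nhds.1 hB P hP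
  exact ⟨y, hyB, (hPc.joinedIn _ (mem_of_mem_nhds hP) _ hyP).mono hPV⟩

namespace Wedge

variable {S A Y : Type*} {a₀ : A}

def mk (s : S) (a : A) : Wedge S A a₀ := Quot.mk _ (s, a)

def lift {y₀ : Y} (γ : S → A → Y) (hγ : ∀ s, γ s a₀ = y₀) : Wedge S A a₀ → Y :=
  Quot.lift (fun x => γ x.1 x.2) <| by
    rintro ⟨s, a⟩ ⟨t, b⟩ (h | ⟨ha, hb⟩)
    · rw [h]
    · dsimp only at ha hb ⊢
      rw [ha, hb, hγ, hγ]

variable [Preorder S] [IsDirectedOrder S] [TopologicalSpace A] [TopologicalSpace Y]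

theorem continuous_lift {y₀ : Y} {γ : S → A → Y} (hγ : ∀ s, γ s a₀ = y₀)
    (hcont : ∀ s, Continuous (γ s))
    (hγy₀ : Tendsto (fun s => Set.range (γ s)) atTop (𝓝 y₀).smallSets) :
    Continuous (lift γ hγ) := by
  refine continuous_def.2 fun W hW => ⟨fun s => hW.preimage (hcont s), ?_⟩
  rintro ⟨s, hs⟩
  have : Nonempty S := ⟨s⟩
  obtain ⟨t, ht⟩ := eventually_atTop.1 <|
    tendsto_smallSets_iff.1 hγy₀ W (hW.mem_nhds (hγ s ▸ hs))
  exact ⟨t, fun s hs a => ht s hs.le ⟨a, rfl⟩⟩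

theorem exists_forall_gt_mem_of_continuous {X : Type*} [TopologicalSpace X]
    {F : Wedge S A a₀ → X} (hF : Continuous F) (s₀ : S) {U : Set X} (hU : U ∈ 𝓝 (F (mk s₀ a₀))) :
    ∃ t, ∀ s, t < s → ∀ a, F (mk s a) ∈ U := by
  obtain ⟨V, hVU, hV, hxV⟩ := mem_nhds_iff.1 hU
  obtain ⟨t, ht⟩ := (hV.preimage hF).2 ⟨s₀, hxV⟩
  exact ⟨t, fun s hs a => hVU (ht s hs a)⟩

end Wedge

theorem exists_arcHedgehog_of_mem_closure {S Y : Type*} [Preorder S] [IsDirectedOrder S]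
    [TopologicalSpace Y] [LocallyPathConnectedSpace Y] {y₀ : Y} {V : S → Set Y}
    (hV : ∀ s, V s ∈ 𝓝 y₀) (hVy₀ : Tendsto V atTop (𝓝 y₀).smallSets) {B : Set Y}
    (hB : y₀ ∈ closure B) :
    ∃ g : C(ArcHedgehog S, Y), (∀ s, g (Wedge.mk s 0) = y₀) ∧ ∀ s, g (Wedge.mk s 1) ∈ B := by
  choose y hyB hy using fun s => exists_joinedIn_mem_of_mem_closure hB (hV s)
  let γ s : Path y₀ (y s) := (hy s).somePath
  refine ⟨⟨Wedge.lift (fun s => γ s) fun s => (γ s).source,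
    Wedge.continuous_lift _ (fun s => (γ s).continuous) (hVy₀.smallSets_mono ?_)⟩,
    fun s => (γ s).source, fun s => (γ s).target ▸ hyB s⟩
  exact Eventually.of_forall fun s => Set.range_subset_iff.2 (hy s).somePath_mem

open OrderDual in
/-- a function from a locally path-connected space is continuous provided
its composition with every map from an arc-hedgehog is continuous. -/
theorem continuous_of_continuous_comp_hedgehog {Y X : Type u} [TopologicalSpace Y]
    [TopologicalSpace X] [LocallyPathConnectedSpace Y] (f : Y → X)
    (h : ∀ (S : Type u) [Preorder S] [IsDirected S (· ≤ ·)]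
      (g : C(ArcHedgehog S, Y)), Continuous (f ∘ g)) :
    Continuous f := by
  refine continuous_iff_continuousAt.2 fun y₀ => ?_
  by_contra hf
  obtain ⟨U, hU, hUc⟩ : ∃ U ∈ 𝓝 (f y₀), y₀ ∈ closure (f ⁻¹' U)ᶜ := by
    simpa [ContinuousAt, tendsto_def, closure_compl, mem_interior_iff_mem_nhds] using hf
  -- The factor `ℕ` provides indices strictly above any `t`, which the hedgehog topology needs.
  let V (s : {V : Set Y // V ∈ 𝓝 y₀}ᵒᵈ × ℕ) : Set Y := (ofDual s.1).1
  have hV : Tendsto V atTop (𝓝 y₀).smallSets := tendsto_smallSets_iff.2 fun W hW =>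
    eventually_atTop.2 ⟨(toDual ⟨W, hW⟩, 0), fun s hs => hs.1⟩
  obtain ⟨g, hg₀, hg₁⟩ := exists_arcHedgehog_of_mem_closure (fun s => (ofDual s.1).2) hV hUc
  have hU' : U ∈ 𝓝 (f (g (Wedge.mk (toDual ⟨Set.univ, univ_mem⟩, 0) 0))) := by rwa [hg₀]
  obtain ⟨t, ht⟩ := Wedge.exists_forall_gt_mem_of_continuous (h _ g) _ hU'
  obtain ⟨s, hs⟩ := exists_gt t
  exact hg₁ s (ht s hs 1)
end

section
/- Let p : E → B be an arc-hedgehog covering with E a Peano space. Then p is regular (every loop in B has all lifts loops or all lifts non-loops) if and only if the deck transformation group of p acts transitively on each fiber of p. -/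
open unitInterval Topology

set_option linter.unnecessarySimpa false

universe u v w

/-!
Given `e₁, e₂` in one fibre, send `x` to the endpoint of the lift from `e₂` of `p ∘ γ`, where `γ`
is a path from `e₁` to `x`. Regularity makes this independent of `γ`: two choices differ by a loop
at `p e₁` whose lift from `e₁` is closed, hence so is its lift from `e₂`. Swapping `e₁` and `e₂`
gives the inverse map, and the basis condition gives continuity: paths from `x` inside `p⁻¹' V`
lift to paths from the image of `x` inside `p⁻¹' V`. Conversely, a deck transformation carries
lifts of a loop to lifts of the same loop, so it carries closed lifts to closed lifts.
-/

section Transport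

variable {E B : Type*} [TopologicalSpace E] [TopologicalSpace B] {p : C(E, B)}

theorem IsArcCovering.eq_of_forall_apply_eq (hp : IsArcCovering p) {g h : C(I, E)}
    (hgh : ∀ t, p (g t) = p (h t)) (h0 : g 0 = h 0) : g = h :=
  (hp (h 0) (p.comp h) rfl).unique ⟨ContinuousMap.ext hgh, h0⟩ ⟨rfl, rfl⟩

theorem IsArcCovering.target_eq_of_forall_apply_eq (hp : IsArcCovering p) {e y y' : E}
    (δ : Path e y) (δ' : Path e y') (h : ∀ t, p (δ t) = p (δ' t)) : y = y' := by
  have := hp.eq_of_forall_apply_eq (g := δ.toContinuousMap) (h := δ'.toContinuousMap) h (by simp)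
  simpa using DFunLike.congr_fun this 1

theorem IsArcCovering.exists_path_lift (hp : IsArcCovering p) {b b' : B} (γ : Path b b')
    {e : E} (he : p e = b) : ∃ (e' : E) (δ : Path e e'), ∀ t, p (δ t) = γ t := by
  obtain ⟨g, hg, hg0⟩ := (hp e γ.toContinuousMap (by simp [he])).exists
  exact ⟨g 1, ⟨g, hg0, rfl⟩, DFunLike.congr_fun hg⟩

theorem IsRegularCovering.target_eq_of_loop (hr : IsRegularCovering p) {x y z : E}
    (γ : Path x x) (δ : Path y z) (h : ∀ t, p (γ t) = p (δ t)) : y = z := by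
  have := hr (p x) (γ.map p.continuous) γ.toContinuousMap δ.toContinuousMap (fun _ => rfl)
    (fun t => (h t).symm) (by simp)
  simpa using this

/-- The graph of the deck transformation taking `e₁` to `e₂`. -/
def IsTransport (p : C(E, B)) (e₁ e₂ x y : E) : Prop :=
  ∃ (γ : Path e₁ x) (δ : Path e₂ y), ∀ t, p (γ t) = p (δ t)

theorem IsTransport.refl {e₁ e₂ : E} (he : p e₁ = p e₂) : IsTransport p e₁ e₂ e₁ e₂ :=
  ⟨Path.refl e₁, Path.refl e₂, fun _ => he⟩

theorem IsTransport.symm {e₁ e₂ x y : E} (h : IsTransport p e₁ e₂ x y) :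
    IsTransport p e₂ e₁ y x :=
  let ⟨γ, δ, hγδ⟩ := h
  ⟨δ, γ, fun t => (hγδ t).symm⟩

theorem IsTransport.apply_eq {e₁ e₂ x y : E} (h : IsTransport p e₁ e₂ x y) : p x = p y := by
  obtain ⟨γ, δ, hγδ⟩ := h
  simpa using hγδ 1

theorem IsTransport.trans {e₁ e₂ x y w z : E} (h : IsTransport p e₁ e₂ x y) (δ : Path x w)
    (δ' : Path y z) (hδ : ∀ t, p (δ t) = p (δ' t)) : IsTransport p e₁ e₂ w z := by
  obtain ⟨γ, γ', hγ⟩ := h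
  refine ⟨γ.trans δ, γ'.trans δ', fun t => ?_⟩
  simp only [Path.trans_apply]
  split_ifs
  exacts [hγ _, hδ _]

theorem IsArcCovering.exists_isTransport [PathConnectedSpace E] (hp : IsArcCovering p)
    {e₁ e₂ : E} (he : p e₁ = p e₂) (x : E) : ∃ y, IsTransport p e₁ e₂ x y := by
  obtain ⟨y, δ, hδ⟩ := hp.exists_path_lift ((PathConnectedSpace.somePath e₁ x).map p.continuous)
    he.symm
  exact ⟨y, _, δ, fun t => (hδ t).symm⟩

theorem IsTransport.eq (hp : IsArcCovering p) (hr : IsRegularCovering p) {e₁ e₂ x y y' : E}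
    (h : IsTransport p e₁ e₂ x y) (h' : IsTransport p e₁ e₂ x y') : y = y' := by
  have hxy := h.apply_eq
  obtain ⟨γ, δ, hγδ⟩ := h
  obtain ⟨γ', δ', hγδ'⟩ := h'
  obtain ⟨z, ε, hε⟩ := hp.exists_path_lift (γ'.symm.map p.continuous) hxy.symm
  -- `γ ⬝ γ'⁻¹` is a closed lift from `e₁` of the loop that `δ ⬝ ε` lifts from `e₂`
  obtain rfl : e₂ = z := hr.target_eq_of_loop (γ.trans γ'.symm) (δ.trans ε) fun t => by
    simp only [Path.trans_apply]
    split_ifs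
    exacts [hγδ _, (hε _).symm]
  exact hp.target_eq_of_forall_apply_eq ε.symm δ' fun t => by simp [hε, hγδ']

theorem IsTransport.continuous [LocallyPathConnectedSpace E] (hp : IsArcCovering p)
    (hr : IsRegularCovering p) (hbasis : HedgehogBasisCondition p) {e₁ e₂ : E} {f : E → E}
    (hf : ∀ x, IsTransport p e₁ e₂ x (f x)) : Continuous f := by
  refine continuous_iff_continuousAt.2 fun x => ?_
  refine (nhds_basis_opens (f x)).tendsto_right_iff.2 fun U ⟨hxU, hU⟩ => ?_
  obtain ⟨V, hV, hVU⟩ := hbasis (f x) U hU hxU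
  rw [← (hf x).apply_eq] at hV
  have hW : pathComponentIn (p ⁻¹' interior V) x ∈ 𝓝 x :=
    ((isOpen_interior.preimage p.continuous).pathComponentIn x).mem_nhds
      (mem_pathComponentIn_self (mem_interior_iff_mem_nhds.2 hV))
  filter_upwards [hW] with w ⟨δ, hδ⟩
  obtain ⟨z, δ', hδ'⟩ := hp.exists_path_lift (δ.map p.continuous) (hf x).apply_eq.symm
  obtain rfl : f w = z := (hf w).eq hp hr ((hf x).trans δ δ' fun t => (hδ' t).symm)
  exact hVU ⟨δ', fun t => by simpa [hδ'] using interior_subset (hδ t)⟩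

theorem IsRegularCovering.exists_deck_transformation [PathConnectedSpace E]
    [LocallyPathConnectedSpace E] (hr : IsRegularCovering p) (hp : IsArcCovering p)
    (hbasis : HedgehogBasisCondition p) {e₁ e₂ : E} (he : p e₁ = p e₂) :
    ∃ h : E ≃ₜ E, (∀ x, p (h x) = p x) ∧ h e₁ = e₂ := by
  choose f hf using hp.exists_isTransport he
  choose g hg using hp.exists_isTransport he.symm
  refine ⟨⟨⟨f, g, fun x => (hg (f x)).eq hp hr (hf x).symm,
      fun y => (hf (g y)).eq hp hr (hg y).symm⟩,
    IsTransport.continuous hp hr hbasis hf, IsTransport.continuous hp hr hbasis hg⟩,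
    fun x => (hf x).apply_eq.symm, (hf e₁).eq hp hr (.refl he)⟩

theorem IsArcCovering.isRegularCovering_of_exists_deck_transformation (hp : IsArcCovering p)
    (h : ∀ e₁ e₂ : E, p e₁ = p e₂ → ∃ φ : E ≃ₜ E, (∀ x, p (φ x) = p x) ∧ φ e₁ = e₂) :
    IsRegularCovering p := by
  intro b α g g' hg hg' hg01
  obtain ⟨φ, hφp, hφ⟩ := h (g 0) (g' 0) (by rw [hg, hg'])
  have hφg : (φ : C(E, E)).comp g = g' :=
    hp.eq_of_forall_apply_eq (fun t => by simp [hφp, hg, hg']) (by simpa using hφ)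
  calc g' 0 = φ (g 0) := hφ.symm
    _ = φ (g 1) := by rw [hg01]
    _ = g' 1 := DFunLike.congr_fun hφg 1

end Transport

/-- an arc-hedgehog covering with Peano total space is regular iff its
deck transformation group acts transitively on each fiber. -/
theorem regular_iff_dtg_transitive {E B : Type*} [TopologicalSpace E] [TopologicalSpace B]
    [ConnectedSpace E] [LocallyPathConnectedSpace E]
    (p : C(E, B)) (hp : IsArcCovering p) (hbasis : HedgehogBasisCondition p) :
    IsRegularCovering p ↔
      ∀ e₁ e₂ : E, p e₁ = p e₂ →
        ∃ h : E ≃ₜ E, (∀ x, p (h x) = p x) ∧ h e₁ = e₂ := by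
  have : PathConnectedSpace E := pathConnectedSpace_iff_connectedSpace.2 ‹_›
  exact ⟨fun hr _ _ he => hr.exists_deck_transformation hp hbasis he,
    hp.isRegularCovering_of_exists_deck_transformation⟩
end
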